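/- Let M be a maximum matching in a finite bipartite graph G = (C ∪ S, E) in which every client is matched, and let α be the balanced server flow loads (so α(s) ≤ 1 for all s). Then for a server s there exists an augmenting tail from s to an unmatched server if and only if α(s) < 1. -/

import Mathlib

open scoped Classical

/-- The load of server `s` under flow `x`. -/
def load {C S : Type*} [Fintype C] (x : C → S → ℝ) (s : S) : ℝ := ∑ c, x c s

/-- `x` is a server flow: nonnegative, supported on edges, each client sends one unit. -/
def IsServerFlow {C S : Type*} [Fintype S] (Adj : C → S → Prop) (x : C → S → ℝ) : Prop :=
  (∀ c s, 0 ≤ x c s) ∧ (∀ c s, ¬ Adj c s → x c s = 0) ∧ (∀ c, ∑ s, x c s = 1)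

/-- `x` is balanced: each client only sends flow to its minimum-load neighbors. -/
def IsBalanced {C S : Type*} [Fintype C] [Fintype S] (Adj : C → S → Prop)
    (x : C → S → ℝ) : Prop :=
  ∀ c s, 0 < x c s → ∀ s', Adj c s' → load x s ≤ load x s'

/-- The active neighbors `A(c)` of a client `c`: the minimum-load neighbors of `c`. -/
noncomputable def activeN {C S : Type*} [Fintype C] [Fintype S] (Adj : C → S → Prop)
    (x : C → S → ℝ) (c : C) : Finset S :=
  Finset.univ.filter fun s => Adj c s ∧ ∀ s', Adj c s' → load x s ≤ load x s'


/-- An augmenting tail from server `s₀` with respect to the matching `m` (which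
saturates all clients): an alternating walk `s₀ = sv 0, cl 0, sv 1, …, sv k` in which
each `(cl i, sv i)` is a matched edge and each `(cl i, sv (i+1))` is an edge of the
graph, ending at an unmatched server `sv k`. -/
def Tail {C S : Type*} (Adj : C → S → Prop) (m : C → S) (s₀ : S)
    (k : ℕ) (sv : ℕ → S) (cl : ℕ → C) : Prop :=
  sv 0 = s₀ ∧
  (∀ i < k, m (cl i) = sv i) ∧
  (∀ i < k, Adj (cl i) (sv (i + 1))) ∧
  (∀ c, m c ≠ sv k)

/-!
Every server has load at most `1`: the clients sending flow to the servers of load at least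
`β` have all their neighbours among those servers, so these servers carry exactly one unit
per such client, while the matching maps these clients injectively into them. When `β = 1`
the two counts agree, so every server of load `1` is matched to a client all of whose
neighbours have load `1`; hence an alternating path from a server of load `1` never leaves
the matched servers of load `1`. Conversely, if every server reachable from `s` by
alternating paths is matched, the clients matched into the reachable set `R` have all their
neighbours in `R` and are as many as `R`, so the loads on `R` sum to at least `|R|`, which is
impossible if `α(s) < 1`.
-/

open Finset Relation

section Flow

variable {C S : Type*} {Adj : C → S → Prop} {x : C → S → ℝ}

noncomputable def serversAbove [Fintype C] [Fintype S] (x : C → S → ℝ) (β : ℝ) :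
    Finset S :=
  univ.filter fun t => β ≤ load x t

noncomputable def feeders [Fintype C] (x : C → S → ℝ) (R : Finset S) : Finset C :=
  univ.filter fun c => ∃ t ∈ R, 0 < x c t

@[simp]
lemma mem_serversAbove [Fintype C] [Fintype S] {β : ℝ} {t : S} :
    t ∈ serversAbove x β ↔ β ≤ load x t := by
  simp [serversAbove]

@[simp]
lemma mem_feeders [Fintype C] {R : Finset S} {c : C} :
    c ∈ feeders x R ↔ ∃ t ∈ R, 0 < x c t := by
  simp [feeders]

lemma sum_load_eq_sum_sum [Fintype C] (R : Finset S) :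
    ∑ t ∈ R, load x t = ∑ c, ∑ t ∈ R, x c t :=
  sum_comm

lemma IsServerFlow.sum_eq_one_of_forall_adj_mem [Fintype S] (hflow : IsServerFlow Adj x)
    {R : Finset S} {c : C} (hc : ∀ t, Adj c t → t ∈ R) : ∑ t ∈ R, x c t = 1 := by
  rw [← hflow.2.2 c]
  refine sum_subset (subset_univ R) fun t _ htR => ?_
  by_contra hne
  exact htR (hc t (by_contra fun h => hne (hflow.2.1 c t h)))

lemma IsServerFlow.card_le_sum_load [Fintype C] [Fintype S] (hflow : IsServerFlow Adj x)
    {R : Finset S} {D : Finset C}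
    (hD : ∀ c ∈ D, ∀ t, Adj c t → t ∈ R) : (#D : ℝ) ≤ ∑ t ∈ R, load x t :=
  calc (#D : ℝ) = ∑ c ∈ D, ∑ t ∈ R, x c t := by
        rw [sum_congr rfl fun c hc => hflow.sum_eq_one_of_forall_adj_mem (hD c hc)]; simp
    _ ≤ ∑ c, ∑ t ∈ R, x c t :=
        sum_le_sum_of_subset_of_nonneg (subset_univ D) fun c _ _ =>
          sum_nonneg fun t _ => hflow.1 c t
    _ = ∑ t ∈ R, load x t := (sum_load_eq_sum_sum R).symm

lemma IsServerFlow.sum_load_eq_card_feeders [Fintype C] [Fintype S]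
    (hflow : IsServerFlow Adj x) {R : Finset S}
    (hR : ∀ c ∈ feeders x R, ∀ t, Adj c t → t ∈ R) :
    ∑ t ∈ R, load x t = #(feeders x R) := by
  rw [sum_load_eq_sum_sum, ← sum_subset (subset_univ (feeders x R)), sum_congr rfl fun c hc =>
    hflow.sum_eq_one_of_forall_adj_mem (hR c hc)]
  · simp
  · intro c _ hc
    refine sum_eq_zero fun t ht => le_antisymm (not_lt.1 fun hpos => hc ?_) (hflow.1 c t)
    exact mem_feeders.2 ⟨t, ht, hpos⟩

lemma IsBalanced.mem_serversAbove_of_adj [Fintype C] [Fintype S] (hbal : IsBalanced Adj x)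
    {β : ℝ} {c : C} {u : S}
    (hc : c ∈ feeders x (serversAbove x β)) (hu : Adj c u) : u ∈ serversAbove x β := by
  obtain ⟨t, ht, hpos⟩ := mem_feeders.1 hc
  exact mem_serversAbove.2 ((mem_serversAbove.1 ht).trans (hbal c t hpos u hu))

end Flow

section Matching

variable {C S : Type*} [Fintype C] [Fintype S] {Adj : C → S → Prop} {m : C → S}
  {x : C → S → ℝ}

lemma sum_load_serversAbove (hflow : IsServerFlow Adj x) (hbal : IsBalanced Adj x) (β : ℝ) :
    ∑ t ∈ serversAbove x β, load x t = #(feeders x (serversAbove x β)) :=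
  hflow.sum_load_eq_card_feeders fun _ hc _ hu => hbal.mem_serversAbove_of_adj hc hu

lemma card_feeders_serversAbove_le (hm : Function.Injective m) (hmAdj : ∀ c, Adj c (m c))
    (hbal : IsBalanced Adj x) (β : ℝ) :
    #(feeders x (serversAbove x β)) ≤ #(serversAbove x β) :=
  card_le_card_of_injOn m (fun c hc => hbal.mem_serversAbove_of_adj hc (hmAdj c))
    hm.injOn

lemma load_le_one (hm : Function.Injective m) (hmAdj : ∀ c, Adj c (m c))
    (hflow : IsServerFlow Adj x) (hbal : IsBalanced Adj x) (t : S) : load x t ≤ 1 := by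
  set T := serversAbove x (load x t)
  have htT : t ∈ T := mem_serversAbove.2 le_rfl
  have hT : 0 < (#T : ℝ) := by exact_mod_cast card_pos.2 ⟨t, htT⟩
  have : #T * load x t ≤ #T := calc
    #T * load x t ≤ ∑ u ∈ T, load x u := by
      simpa using card_nsmul_le_sum T (load x) (load x t) fun u hu => mem_serversAbove.1 hu
    _ = #(feeders x T) := sum_load_serversAbove hflow hbal _
    _ ≤ #T := by exact_mod_cast card_feeders_serversAbove_le hm hmAdj hbal _
  exact (mul_le_iff_le_one_right hT).1 (by simpa using this)

lemma exists_eq_matched_of_load_eq_one (hm : Function.Injective m) (hmAdj : ∀ c, Adj c (m c))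
    (hflow : IsServerFlow Adj x) (hbal : IsBalanced Adj x) {t : S} (ht : load x t = 1) :
    ∃ c, m c = t ∧ ∀ u, Adj c u → load x u = 1 := by
  set T := serversAbove x 1
  set D := feeders x T
  have hload : ∀ u ∈ T, load x u = 1 := fun u hu =>
    le_antisymm (load_le_one hm hmAdj hflow hbal u) (mem_serversAbove.1 hu)
  have hcard : #T ≤ #D := by
    have := sum_load_serversAbove hflow hbal 1
    rw [sum_congr rfl hload] at this
    exact_mod_cast (by simpa using this : (#T : ℝ) = #D).le
  have himage : D.image m = T :=
    eq_of_subset_of_card_le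
      (image_subset_iff.2 fun c hc => hbal.mem_serversAbove_of_adj hc (hmAdj c))
      (by rwa [card_image_of_injective _ hm])
  obtain ⟨c, hc, rfl⟩ := mem_image.1 (himage ▸ mem_serversAbove.2 ht.ge : t ∈ D.image m)
  exact ⟨c, rfl, fun u hu => hload u (hbal.mem_serversAbove_of_adj hc hu)⟩

end Matching

section Alternating

variable {C S : Type*} {Adj : C → S → Prop} {m : C → S} {x : C → S → ℝ}

def AltStep (Adj : C → S → Prop) (m : C → S) (t u : S) : Prop := ∃ c, m c = t ∧ Adj c u

lemma reflTransGen_altStep_of_walk {s : S} {k : ℕ} {sv : ℕ → S} {cl : ℕ → C}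
    (h0 : sv 0 = s) (hmatch : ∀ i < k, m (cl i) = sv i)
    (hadj : ∀ i < k, Adj (cl i) (sv (i + 1))) :
    ∀ i ≤ k, ReflTransGen (AltStep Adj m) s (sv i)
  | 0, _ => h0 ▸ .refl
  | i + 1, hi => (reflTransGen_altStep_of_walk h0 hmatch hadj i (by omega)).tail
      ⟨cl i, hmatch i (by omega), hadj i (by omega)⟩

lemma exists_walk_of_reflTransGen_altStep [Nonempty C] {s t : S}
    (h : ReflTransGen (AltStep Adj m) s t) :
    ∃ (k : ℕ) (sv : ℕ → S) (cl : ℕ → C), sv 0 = s ∧ (∀ i < k, m (cl i) = sv i) ∧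
      (∀ i < k, Adj (cl i) (sv (i + 1))) ∧ sv k = t := by
  induction h with
  | refl => exact ⟨0, fun _ => s, fun _ => Classical.arbitrary C, rfl, by simp, by simp, rfl⟩
  | @tail t u _ hstep ih =>
    obtain ⟨c, hct, hcu⟩ := hstep
    obtain ⟨k, sv, cl, h0, hmatch, hadj, rfl⟩ := ih
    refine ⟨k + 1, fun i => if i ≤ k then sv i else u, fun i => if i < k then cl i else c,
      by simpa using h0, fun i hi => ?_, fun i hi => ?_, by simp⟩
    · by_cases hik : i < k
      · simpa [hik, hik.le] using hmatch i hik
      · simpa [hik, show i = k by omega] using hct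
    · by_cases hik : i < k
      · simpa [hik, show i + 1 ≤ k by omega] using hadj i hik
      · simpa [hik] using hcu

lemma exists_tail_iff_exists_reflTransGen [Nonempty C] {s : S} :
    (∃ (k : ℕ) (sv : ℕ → S) (cl : ℕ → C), Tail Adj m s k sv cl) ↔
      ∃ t, ReflTransGen (AltStep Adj m) s t ∧ ∀ c, m c ≠ t := by
  constructor
  · rintro ⟨k, sv, cl, h0, hmatch, hadj, hk⟩
    exact ⟨sv k, reflTransGen_altStep_of_walk h0 hmatch hadj k le_rfl, hk⟩
  · rintro ⟨t, hst, ht⟩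
    obtain ⟨k, sv, cl, h0, hmatch, hadj, rfl⟩ := exists_walk_of_reflTransGen_altStep hst
    exact ⟨k, sv, cl, h0, hmatch, hadj, ht⟩

variable [Fintype C] [Fintype S]

lemma load_eq_one_of_reflTransGen_altStep (hm : Function.Injective m)
    (hmAdj : ∀ c, Adj c (m c)) (hflow : IsServerFlow Adj x) (hbal : IsBalanced Adj x)
    {s t : S} (hs : load x s = 1) (h : ReflTransGen (AltStep Adj m) s t) : load x t = 1 := by
  induction h with
  | refl => exact hs
  | tail _ hstep ih =>
    obtain ⟨c, hc, hcu⟩ := hstep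
    obtain ⟨c', hc', hload⟩ := exists_eq_matched_of_load_eq_one hm hmAdj hflow hbal ih
    exact hload _ (hm (hc'.trans hc.symm) ▸ hcu)

lemma exists_unmatched_of_load_lt_one (hm : Function.Injective m) (hmAdj : ∀ c, Adj c (m c))
    (hflow : IsServerFlow Adj x) (hbal : IsBalanced Adj x) {s : S} (hs : load x s < 1) :
    ∃ t, ReflTransGen (AltStep Adj m) s t ∧ ∀ c, m c ≠ t := by
  by_contra! hmatched
  set R := univ.filter (ReflTransGen (AltStep Adj m) s)
  set D := univ.filter fun c => m c ∈ R
  have hsR : s ∈ R := mem_filter.2 ⟨mem_univ s, .refl⟩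
  have hRD : #R ≤ #D := card_le_card_of_surjOn m fun t ht =>
    let ⟨c, hc⟩ := hmatched t (mem_filter.1 ht).2
    ⟨c, mem_filter.2 ⟨mem_univ c, hc ▸ ht⟩, hc⟩
  have hDR : (#D : ℝ) ≤ ∑ t ∈ R, load x t := hflow.card_le_sum_load fun c hc u hu =>
    mem_filter.2 ⟨mem_univ u, (mem_filter.1 (mem_filter.1 hc).2).2.tail ⟨c, rfl, hu⟩⟩
  have hsum : ∑ t ∈ R, load x t < #R := by
    simpa using sum_lt_sum (fun t _ => load_le_one hm hmAdj hflow hbal t) ⟨s, hsR, hs⟩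
  exact absurd (hDR.trans_lt hsum) (not_lt.2 (by exact_mod_cast hRD))

end Alternating

theorem stmt_18_general {C S : Type*} [Fintype C] [Fintype S] [Nonempty C]
    (Adj : C → S → Prop)
    (m : C → S) (hm : Function.Injective m) (hmAdj : ∀ c, Adj c (m c))
    (x : C → S → ℝ) (hflow : IsServerFlow Adj x) (hbal : IsBalanced Adj x)
    (s : S) :
    (∃ (k : ℕ) (sv : ℕ → S) (cl : ℕ → C), Tail Adj m s k sv cl) ↔ load x s < 1 := by
  rw [exists_tail_iff_exists_reflTransGen]
  refine ⟨fun ⟨t, hst, ht⟩ => ?_, exists_unmatched_of_load_lt_one hm hmAdj hflow hbal⟩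
  refine (load_le_one hm hmAdj hflow hbal s).lt_of_ne fun hs => ?_
  obtain ⟨c, hc, -⟩ := exists_eq_matched_of_load_eq_one hm hmAdj hflow hbal
    (load_eq_one_of_reflTransGen_altStep hm hmAdj hflow hbal hs hst)
  exact ht c hc

/-- If `m` is a matching saturating all clients and `x` is the balanced server flow,
then a server `s` admits an augmenting tail to an unmatched server iff `α(s) < 1`. -/
theorem stmt_18 {C S : Type*} [Fintype C] [Fintype S] [Nonempty C]
    (Adj : C → S → Prop)
    (hnb : ∀ c : C, ∃ s, Adj c s)
    (m : C → S) (hm : Function.Injective m) (hmAdj : ∀ c, Adj c (m c))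
    (x : C → S → ℝ) (hflow : IsServerFlow Adj x) (hbal : IsBalanced Adj x)
    (s : S) :
    (∃ (k : ℕ) (sv : ℕ → S) (cl : ℕ → C), Tail Adj m s k sv cl) ↔ load x s < 1 :=
  stmt_18_general Adj m hm hmAdj x hflow hbal s
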